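/- Let E be a nonzero Banach space and let (⋆_n) be a sequence of unital continuous multiplications on E converging (in the operator norm on bounded bilinear operators) to a continuous multiplication ⋆ that lies in the boundary of Mltp_u(E) inside Mltp(E) (in particular ⋆ is not unital). Then ‖e_{⋆_n}‖ → ∞. -/

import Mathlib

open Filter

/-- The set of continuous multiplications on `E`: associative bounded bilinear operators
`E × E → E`, as a subtype of the space of bounded bilinear operators with the operator-norm
topology. -/
abbrev Mltp (E : Type*) [NormedAddCommGroup E] [NormedSpace ℝ E] :=
  {g : E →L[ℝ] E →L[ℝ] E // ∀ x y z : E, g (g x y) z = g x (g y z)}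

/-!
If `e` is the unit of `g` and `‖g - g'‖ * ‖e‖ < 1`, then left and right multiplication by `e`
for `g'` are within distance `< 1` of the identity operator, hence invertible by the Neumann
series; for an associative `g'` this already forces a two-sided unit. So the unital
multiplications form an open set, a boundary point `f` is not unital, and therefore
`‖F n - f‖ * ‖eF n‖ ≥ 1` for every `n`, i.e. `‖eF n‖ ≥ ‖F n - f‖⁻¹ → ∞`.
-/

theorem exists_two_sided_unit_of_bijective_mul {α : Type*} (mul : α → α → α)
    (assoc : ∀ x y z, mul (mul x y) z = mul x (mul y z)) (e : α)
    (hl : Function.Bijective (mul e)) (hr : Function.Bijective (fun x => mul x e)) :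
    ∃ u, ∀ x, mul u x = x ∧ mul x u = x := by
  obtain ⟨u, hu⟩ := hl.2 e
  obtain ⟨v, hv⟩ := hr.2 e
  have hu_left (x : α) : mul u x = x := hl.1 (by rw [← assoc, hu])
  have hv_right (x : α) : mul x v = x := hr.1 (by simp only [assoc, hv])
  have huv : u = v := by rw [← hv_right u, hu_left v]
  exact ⟨u, fun x => ⟨hu_left x, huv ▸ hv_right x⟩⟩

section Perturbation

variable {𝕜 E : Type*} [NontriviallyNormedField 𝕜] [NormedAddCommGroup E] [NormedSpace 𝕜 E]

def IsTwoSidedUnit (g : E →L[𝕜] E →L[𝕜] E) (e : E) : Prop :=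
  ∀ x, g e x = x ∧ g x e = x

theorem bijective_of_norm_one_sub_lt_one [CompleteSpace E] {a : E →L[𝕜] E}
    (h : ‖1 - a‖ < 1) : Function.Bijective a :=
  ContinuousLinearMap.isUnit_iff_bijective.1 (by simpa using (Units.oneSub (1 - a) h).isUnit)

theorem IsTwoSidedUnit.bijective_apply [CompleteSpace E] {g g' : E →L[𝕜] E →L[𝕜] E} {e : E}
    (he : IsTwoSidedUnit g e) (hclose : ‖g - g'‖ * ‖e‖ < 1) : Function.Bijective (g' e) := by
  refine bijective_of_norm_one_sub_lt_one (lt_of_le_of_lt ?_ hclose)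
  have hge : g e = 1 := ContinuousLinearMap.ext fun x => (he x).1
  calc ‖1 - g' e‖ = ‖(g - g') e‖ := by rw [← hge]; rfl
    _ ≤ ‖g - g'‖ * ‖e‖ := (g - g').le_opNorm e

theorem IsTwoSidedUnit.flip {g : E →L[𝕜] E →L[𝕜] E} {e : E} (he : IsTwoSidedUnit g e) :
    IsTwoSidedUnit g.flip e :=
  fun x => ⟨(he x).2, (he x).1⟩

theorem IsTwoSidedUnit.exists_of_norm_sub_mul_lt_one [CompleteSpace E]
    {g g' : E →L[𝕜] E →L[𝕜] E} (assoc : ∀ x y z, g' (g' x y) z = g' x (g' y z)) {e : E}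
    (he : IsTwoSidedUnit g e) (hclose : ‖g - g'‖ * ‖e‖ < 1) : ∃ u, IsTwoSidedUnit g' u := by
  have hflip : ‖g.flip - g'.flip‖ * ‖e‖ < 1 := by
    have : g.flip - g'.flip = (g - g').flip := by ext; rfl
    rwa [this, ContinuousLinearMap.opNorm_flip]
  exact exists_two_sided_unit_of_bijective_mul (fun x y => g' x y) assoc e
    (he.bijective_apply hclose) (he.flip.bijective_apply hflip)

end Perturbation

theorem isOpen_setOf_exists_isTwoSidedUnit {E : Type*} [NormedAddCommGroup E] [NormedSpace ℝ E]
    [CompleteSpace E] : IsOpen {g : Mltp E | ∃ e, IsTwoSidedUnit g.1 e} := by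
  refine isOpen_iff_mem_nhds.2 fun g ⟨e, he⟩ => ?_
  -- `(E := _)` selects the norm topology, which is not reducibly the one carried by `→L[ℝ]`.
  have hcont : Continuous fun g' : Mltp E => ‖g.1 - g'.1‖ * ‖e‖ :=
    ((continuous_norm (E := E →L[ℝ] E →L[ℝ] E)).comp
      (continuous_const.sub continuous_subtype_val)).mul continuous_const
  have hnhds : {g' : Mltp E | ‖g.1 - g'.1‖ * ‖e‖ < 1} ∈ nhds g :=
    (isOpen_lt hcont continuous_const).mem_nhds <| by
      simp only [Set.mem_ofPred_eq, sub_self, ContinuousLinearMap.opNorm_zero, zero_mul,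
        zero_lt_one]
  exact mem_of_superset hnhds fun g' hg' => he.exists_of_norm_sub_mul_lt_one g'.2 hg'

theorem stmt_13_general
    {E : Type*} [NormedAddCommGroup E] [NormedSpace ℝ E] [CompleteSpace E]
    (F : ℕ → Mltp E)
    (eF : ℕ → E) (heF : ∀ n, ∀ x : E, (F n).1 (eF n) x = x ∧ (F n).1 x (eF n) = x)
    (f : Mltp E)
    (hfr : f ∈ frontier {g : Mltp E | ∃ e : E, ∀ x : E, g.1 e x = x ∧ g.1 x e = x})
    (hconv : Tendsto F atTop (nhds f)) :
    Tendsto (fun n => ‖eF n‖) atTop atTop := by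
  have hf : ¬∃ e, IsTwoSidedUnit f.1 e := fun hS =>
    hfr.2 (mem_interior_iff_mem_nhds.2 (isOpen_setOf_exists_isTwoSidedUnit.mem_nhds hS))
  have hbound (n : ℕ) : 1 ≤ ‖(F n).1 - f.1‖ * ‖eF n‖ :=
    not_lt.1 fun h =>
      hf (IsTwoSidedUnit.exists_of_norm_sub_mul_lt_one (g := (F n).1) f.2 (heF n) h)
  have hpos (n : ℕ) : 0 < ‖(F n).1 - f.1‖ :=
    pos_of_mul_pos_left (one_pos.trans_le (hbound n)) (norm_nonneg _)
  have hdist : Tendsto (fun n => ‖(F n).1 - f.1‖) atTop (nhdsWithin 0 (Set.Ioi 0)) := by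
    have hval : Tendsto (fun n => (F n).1) atTop (nhds f.1) :=
      (continuous_subtype_val.tendsto f).comp hconv
    refine tendsto_nhdsWithin_iff.2 ⟨?_, Eventually.of_forall hpos⟩
    exact (tendsto_iff_norm_sub_tendsto_zero (E := E →L[ℝ] E →L[ℝ] E)).1 hval
  exact tendsto_atTop_mono (fun n => (inv_le_iff_one_le_mul₀' (hpos n)).2 (hbound n))
    (tendsto_inv_nhdsGT_zero.comp hdist)

/-- Let `E` be a nonzero Banach space and `(F n)` a sequence of unital
continuous multiplications on `E` (with units `eF n`) converging, in `Mltp E`, to a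
continuous multiplication `f` lying in the boundary of `Mltp_u(E)` inside `Mltp(E)`.
Then `‖eF n‖ → ∞`. -/
theorem stmt_13
    {E : Type*} [NormedAddCommGroup E] [NormedSpace ℝ E] [CompleteSpace E] [Nontrivial E]
    (F : ℕ → Mltp E)
    (eF : ℕ → E) (heF : ∀ n, ∀ x : E, (F n).1 (eF n) x = x ∧ (F n).1 x (eF n) = x)
    (f : Mltp E)
    (hfr : f ∈ frontier {g : Mltp E | ∃ e : E, ∀ x : E, g.1 e x = x ∧ g.1 x e = x})
    (hconv : Tendsto F atTop (nhds f)) :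
    Tendsto (fun n => ‖eF n‖) atTop atTop :=
  stmt_13_general F eF heF f hfr hconv
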